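/- Let α, β, γ, δ ∈ ℝ with αδ − βγ = 1, and let g : I → ℝ be a smooth solution of g''''(2g(g')² − g²g'') + 2g²(g''')² − 20gg'g''g''' + 16(g')³g''' + 18g(g'')³ − 18(g')²(g'')² = 0 on an open interval I. Define g̃(z̃) = (γz + δ)·g(z) where z̃ = (αz + β)/(γz + δ), on an interval where γz + δ ≠ 0. Then g̃, as a function of z̃, satisfies the same fourth-order equation. -/

import Mathlib

/-- The fourth-order ODE
`g''''(2g g'² − g² g'') + 2g² g'''² − 20 g g' g'' g''' + 16 g'³ g''' + 18 g g''³ − 18 g'² g''² = 0`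
at the point `z`. -/
def FourthOrderODE (g : ℝ → ℝ) (z : ℝ) : Prop :=
  iteratedDeriv 4 g z *
      (2 * g z * (deriv g z) ^ 2 - (g z) ^ 2 * iteratedDeriv 2 g z) +
    2 * (g z) ^ 2 * (iteratedDeriv 3 g z) ^ 2 -
    20 * g z * deriv g z * iteratedDeriv 2 g z * iteratedDeriv 3 g z +
    16 * (deriv g z) ^ 3 * iteratedDeriv 3 g z +
    18 * g z * (iteratedDeriv 2 g z) ^ 3 -
    18 * (deriv g z) ^ 2 * (iteratedDeriv 2 g z) ^ 2 = 0

private lemma HasDerivAt.congr_d {f : ℝ → ℝ} {f' g' x : ℝ} (h : HasDerivAt f f' x)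
    (he : f' = g') : HasDerivAt f g' x := he ▸ h

/-- Key differentiation rule for `f(N w) / (α - γ w)^(m+1)` where
`N w = (δ w - β)/(α - γ w)`. -/
private lemma moebius_key (α β γ δ : ℝ) (hdet : α * δ - β * γ = 1)
    {f : ℝ → ℝ} {f' : ℝ} (m : ℕ) {w : ℝ} (ht : α - γ * w ≠ 0)
    (hf : HasDerivAt f f' ((δ * w - β) / (α - γ * w))) :
    HasDerivAt (fun u => f ((δ * u - β) / (α - γ * u)) / (α - γ * u) ^ (m + 1))
      (f' / (α - γ * w) ^ (m + 3) +
        ((m : ℝ) + 1) * γ * f ((δ * w - β) / (α - γ * w)) / (α - γ * w) ^ (m + 2)) w := by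
  have hden : HasDerivAt (fun u : ℝ => α - γ * u) (-γ) w := by
    simpa using (hasDerivAt_const w α).fun_sub ((hasDerivAt_id w).const_mul γ)
  have hnum : HasDerivAt (fun u : ℝ => δ * u - β) δ w := by
    simpa using ((hasDerivAt_id w).const_mul δ).sub_const β
  have hN : HasDerivAt (fun u => (δ * u - β) / (α - γ * u)) (1 / (α - γ * w) ^ 2) w := by
    have h := hnum.div hden ht
    apply h.congr_d
    field_simp
    linear_combination hdet
  have hcomp : HasDerivAt (fun u => f ((δ * u - β) / (α - γ * u)))
      (f' * (1 / (α - γ * w) ^ 2)) w := hf.comp w hN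
  have hpow : HasDerivAt (fun u : ℝ => (α - γ * u) ^ (m + 1))
      (((m : ℝ) + 1) * (α - γ * w) ^ m * (-γ)) w := by
    have h := hden.fun_pow (n := m + 1)
    simpa using h
  have h := hcomp.div hpow (pow_ne_zero _ ht)
  apply h.congr_d
  field_simp
  ring

theorem stmt_18 (α β γ δ : ℝ) (hdet : α * δ - β * γ = 1)
    (I : Set ℝ) (hIopen : IsOpen I) (hIconv : Convex ℝ I)
    (hne : ∀ z ∈ I, γ * z + δ ≠ 0)
    (g : ℝ → ℝ) (hg : ContDiffOn ℝ (⊤ : ℕ∞) g I)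
    (hsol : ∀ z ∈ I, FourthOrderODE g z)
    (gTilde : ℝ → ℝ)
    (hgTilde : ∀ z ∈ I, gTilde ((α * z + β) / (γ * z + δ)) = (γ * z + δ) * g z) :
    ∀ z ∈ I, FourthOrderODE gTilde ((α * z + β) / (γ * z + δ)) := by
  -- derivative facts for g on I
  have hgk : ∀ (k : ℕ), ∀ x ∈ I, HasDerivAt (iteratedDeriv k g) (iteratedDeriv (k + 1) g x) x := by
    intro k x hx
    have hW : ∀ y ∈ I, iteratedDerivWithin k g I y = iteratedDeriv k g y := fun y hy => by
      simp only [iteratedDerivWithin, iteratedDeriv, iteratedFDerivWithin_of_isOpen k hIopen hy]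
    have hd : DifferentiableWithinAt ℝ (iteratedDerivWithin k g I) I x :=
      hg.differentiableOn_iteratedDerivWithin (by exact_mod_cast ENat.coe_lt_top k)
        hIopen.uniqueDiffOn x hx
    have hev : iteratedDerivWithin k g I =ᶠ[nhds x] iteratedDeriv k g := by
      filter_upwards [hIopen.mem_nhds hx] with y hy using hW y hy
    have hd2 : DifferentiableAt ℝ (iteratedDeriv k g) x :=
      (hd.differentiableAt (hIopen.mem_nhds hx)).congr_of_eventuallyEq hev.symm
    have h := hd2.hasDerivAt
    rwa [← iteratedDeriv_succ] at h
  -- the open set U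
  set U : Set ℝ := {w : ℝ | α - γ * w ≠ 0} ∩ (fun w => (δ * w - β) / (α - γ * w)) ⁻¹' I with hUdef
  have hUopen : IsOpen U := by
    have hopen1 : IsOpen {w : ℝ | α - γ * w ≠ 0} := by
      have : {w : ℝ | α - γ * w ≠ 0} = (fun w : ℝ => α - γ * w) ⁻¹' ({0}ᶜ) := rfl
      rw [this]
      exact (by fun_prop : Continuous fun w : ℝ => α - γ * w).isOpen_preimage _
        isOpen_compl_singleton
    have hcont : ContinuousOn (fun w => (δ * w - β) / (α - γ * w)) {w : ℝ | α - γ * w ≠ 0} :=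
      ContinuousOn.div (by fun_prop) (by fun_prop) (fun x hx => hx)
    exact hcont.isOpen_inter_preimage hopen1 hIopen
  have hUt : ∀ w ∈ U, α - γ * w ≠ 0 := fun w hw => hw.1
  have hUI : ∀ w ∈ U, (δ * w - β) / (α - γ * w) ∈ I := fun w hw => hw.2
  -- D functions
  set D0 : ℝ → ℝ := fun u =>
    iteratedDeriv 0 g ((δ * u - β) / (α - γ * u)) / (α - γ * u) ^ 1 with hD0
  set D1 : ℝ → ℝ := fun u =>
    iteratedDeriv 1 g ((δ * u - β) / (α - γ * u)) / (α - γ * u) ^ 3 +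
      γ * (iteratedDeriv 0 g ((δ * u - β) / (α - γ * u)) / (α - γ * u) ^ 2) with hD1
  set D2 : ℝ → ℝ := fun u =>
    iteratedDeriv 2 g ((δ * u - β) / (α - γ * u)) / (α - γ * u) ^ 5 +
      4 * γ * (iteratedDeriv 1 g ((δ * u - β) / (α - γ * u)) / (α - γ * u) ^ 4) +
      2 * γ ^ 2 * (iteratedDeriv 0 g ((δ * u - β) / (α - γ * u)) / (α - γ * u) ^ 3) with hD2
  set D3 : ℝ → ℝ := fun u =>
    iteratedDeriv 3 g ((δ * u - β) / (α - γ * u)) / (α - γ * u) ^ 7 +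
      9 * γ * (iteratedDeriv 2 g ((δ * u - β) / (α - γ * u)) / (α - γ * u) ^ 6) +
      18 * γ ^ 2 * (iteratedDeriv 1 g ((δ * u - β) / (α - γ * u)) / (α - γ * u) ^ 5) +
      6 * γ ^ 3 * (iteratedDeriv 0 g ((δ * u - β) / (α - γ * u)) / (α - γ * u) ^ 4) with hD3
  set D4 : ℝ → ℝ := fun u =>
    iteratedDeriv 4 g ((δ * u - β) / (α - γ * u)) / (α - γ * u) ^ 9 +
      16 * γ * (iteratedDeriv 3 g ((δ * u - β) / (α - γ * u)) / (α - γ * u) ^ 8) +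
      72 * γ ^ 2 * (iteratedDeriv 2 g ((δ * u - β) / (α - γ * u)) / (α - γ * u) ^ 7) +
      96 * γ ^ 3 * (iteratedDeriv 1 g ((δ * u - β) / (α - γ * u)) / (α - γ * u) ^ 6) +
      24 * γ ^ 4 * (iteratedDeriv 0 g ((δ * u - β) / (α - γ * u)) / (α - γ * u) ^ 5) with hD4
  -- the derivative chain
  have S0 : ∀ w ∈ U, HasDerivAt D0 (D1 w) w := by
    intro w hw
    have h := moebius_key α β γ δ hdet 0 (hUt w hw) (hgk 0 _ (hUI w hw))
    simp only [hD0, hD1]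
    exact h.congr_d (by push_cast; ring)
  have S1 : ∀ w ∈ U, HasDerivAt D1 (D2 w) w := by
    intro w hw
    have h := (moebius_key α β γ δ hdet 2 (hUt w hw) (hgk 1 _ (hUI w hw))).add
      ((moebius_key α β γ δ hdet 1 (hUt w hw) (hgk 0 _ (hUI w hw))).const_mul γ)
    simp only [hD1, hD2]
    exact h.congr_d (by push_cast; ring)
  have S2 : ∀ w ∈ U, HasDerivAt D2 (D3 w) w := by
    intro w hw
    have h := ((moebius_key α β γ δ hdet 4 (hUt w hw) (hgk 2 _ (hUI w hw))).add
      ((moebius_key α β γ δ hdet 3 (hUt w hw) (hgk 1 _ (hUI w hw))).const_mul (4 * γ))).add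
      ((moebius_key α β γ δ hdet 2 (hUt w hw) (hgk 0 _ (hUI w hw))).const_mul (2 * γ ^ 2))
    simp only [hD2, hD3]
    exact h.congr_d (by push_cast; ring)
  have S3 : ∀ w ∈ U, HasDerivAt D3 (D4 w) w := by
    intro w hw
    have h := (((moebius_key α β γ δ hdet 6 (hUt w hw) (hgk 3 _ (hUI w hw))).add
      ((moebius_key α β γ δ hdet 5 (hUt w hw) (hgk 2 _ (hUI w hw))).const_mul (9 * γ))).add
      ((moebius_key α β γ δ hdet 4 (hUt w hw) (hgk 1 _ (hUI w hw))).const_mul (18 * γ ^ 2))).add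
      ((moebius_key α β γ δ hdet 3 (hUt w hw) (hgk 0 _ (hUI w hw))).const_mul (6 * γ ^ 3))
    simp only [hD3, hD4]
    exact h.congr_d (by push_cast; ring)
  -- gTilde coincides with D0 on U
  have E0 : ∀ w ∈ U, gTilde w = D0 w := by
    intro w hw
    have ht := hUt w hw
    have hzI := hUI w hw
    set x := (δ * w - β) / (α - γ * w) with hx
    have h1 : (γ * x + δ) * (α - γ * w) = 1 := by
      rw [hx]; field_simp; linear_combination hdet
    have h1' : γ * x + δ = (α - γ * w)⁻¹ := eq_inv_of_mul_eq_one_left h1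
    have hh : γ * x + δ ≠ 0 := by
      rw [h1']; exact inv_ne_zero ht
    have h2 : (α * x + β) / (γ * x + δ) = w := by
      rw [div_eq_iff hh, hx]
      rw [div_eq_mul_inv]
      linear_combination (δ * w - β) * mul_inv_cancel₀ ht
    calc gTilde w = gTilde ((α * x + β) / (γ * x + δ)) := by rw [h2]
      _ = (γ * x + δ) * g x := hgTilde x hzI
      _ = D0 w := by
          rw [h1']
          simp only [hD0, iteratedDeriv_zero, pow_one]
          rw [hx]
          ring
  -- derivative identities on U
  have E1 : ∀ w ∈ U, deriv gTilde w = D1 w := by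
    intro w hw
    have hev : gTilde =ᶠ[nhds w] D0 := by
      filter_upwards [hUopen.mem_nhds hw] with v hv using E0 v hv
    rw [hev.deriv_eq]
    exact (S0 w hw).deriv
  have E2 : ∀ w ∈ U, iteratedDeriv 2 gTilde w = D2 w := by
    intro w hw
    have hev : deriv gTilde =ᶠ[nhds w] D1 := by
      filter_upwards [hUopen.mem_nhds hw] with v hv using E1 v hv
    have h21 : iteratedDeriv 2 gTilde = deriv (iteratedDeriv 1 gTilde) := iteratedDeriv_succ
    rw [h21, iteratedDeriv_one, hev.deriv_eq]
    exact (S1 w hw).deriv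
  have E3 : ∀ w ∈ U, iteratedDeriv 3 gTilde w = D3 w := by
    intro w hw
    have hev : iteratedDeriv 2 gTilde =ᶠ[nhds w] D2 := by
      filter_upwards [hUopen.mem_nhds hw] with v hv using E2 v hv
    have h32 : iteratedDeriv 3 gTilde = deriv (iteratedDeriv 2 gTilde) := iteratedDeriv_succ
    rw [h32, hev.deriv_eq]
    exact (S2 w hw).deriv
  have E4 : ∀ w ∈ U, iteratedDeriv 4 gTilde w = D4 w := by
    intro w hw
    have hev : iteratedDeriv 3 gTilde =ᶠ[nhds w] D3 := by
      filter_upwards [hUopen.mem_nhds hw] with v hv using E3 v hv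
    have h43 : iteratedDeriv 4 gTilde = deriv (iteratedDeriv 3 gTilde) := iteratedDeriv_succ
    rw [h43, hev.deriv_eq]
    exact (S3 w hw).deriv
  -- now put everything together at w₀
  intro z hz
  have hc0 : γ * z + δ ≠ 0 := hne z hz
  set c : ℝ := γ * z + δ with hc
  set w₀ : ℝ := (α * z + β) / c with hw₀
  have ht₀ : α - γ * w₀ = c⁻¹ := by
    apply eq_inv_of_mul_eq_one_left
    rw [hw₀, hc]
    rw [div_eq_mul_inv]
    linear_combination hdet - γ * (α * z + β) * mul_inv_cancel₀ (hne z hz)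
  have ht₀ne : α - γ * w₀ ≠ 0 := by rw [ht₀]; exact inv_ne_zero hc0
  have hN₀ : (δ * w₀ - β) / (α - γ * w₀) = z := by
    rw [ht₀, hw₀, hc]
    rw [div_inv_eq_mul, div_eq_mul_inv]
    linear_combination z * hdet + δ * (α * z + β) * mul_inv_cancel₀ (hne z hz)
  have hw₀U : w₀ ∈ U := by
    refine ⟨ht₀ne, ?_⟩
    show (δ * w₀ - β) / (α - γ * w₀) ∈ I
    rw [hN₀]; exact hz
  have V0 : gTilde w₀ = c * g z := by
    rw [E0 w₀ hw₀U]
    simp only [hD0, iteratedDeriv_zero, pow_one]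
    rw [hN₀, ht₀]
    field_simp
  have V1 : deriv gTilde w₀ = γ * c ^ 2 * g z + c ^ 3 * deriv g z := by
    rw [E1 w₀ hw₀U]
    simp only [hD1, iteratedDeriv_zero, iteratedDeriv_one]
    rw [hN₀, ht₀]
    field_simp
    ring
  have V2 : iteratedDeriv 2 gTilde w₀ =
      2 * γ ^ 2 * c ^ 3 * g z + 4 * γ * c ^ 4 * deriv g z + c ^ 5 * iteratedDeriv 2 g z := by
    rw [E2 w₀ hw₀U]
    simp only [hD2, iteratedDeriv_zero, iteratedDeriv_one]
    rw [hN₀, ht₀]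
    field_simp
    ring
  have V3 : iteratedDeriv 3 gTilde w₀ =
      6 * γ ^ 3 * c ^ 4 * g z + 18 * γ ^ 2 * c ^ 5 * deriv g z + 9 * γ * c ^ 6 * iteratedDeriv 2 g z
        + c ^ 7 * iteratedDeriv 3 g z := by
    rw [E3 w₀ hw₀U]
    simp only [hD3, iteratedDeriv_zero, iteratedDeriv_one]
    rw [hN₀, ht₀]
    field_simp
    ring
  have V4 : iteratedDeriv 4 gTilde w₀ =
      24 * γ ^ 4 * c ^ 5 * g z + 96 * γ ^ 3 * c ^ 6 * deriv g z
        + 72 * γ ^ 2 * c ^ 7 * iteratedDeriv 2 g z + 16 * γ * c ^ 8 * iteratedDeriv 3 g z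
        + c ^ 9 * iteratedDeriv 4 g z := by
    rw [E4 w₀ hw₀U]
    simp only [hD4, iteratedDeriv_zero, iteratedDeriv_one]
    rw [hN₀, ht₀]
    field_simp
    ring
  have hODE := hsol z hz
  unfold FourthOrderODE at hODE ⊢
  rw [V4, V3, V2, V1, V0]
  linear_combination c ^ 16 * hODE
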